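/- arXiv:1810.04513 — 2 statements merged into one kernel-verified Lean document; each statement's English description precedes it below -/
import Mathlib

section
/- Let X ∈ ℝ^{n×p}, y ∈ ℝ^n, λ > 0, and let s* ⊆ {1,…,p}. Suppose β̂ ∈ ℝ^p satisfies β̂_j = 0 for all j ∉ s* and β̂ minimizes the Lasso objective L_λ over the subspace {β ∈ ℝ^p : β_j = 0 for all j ∉ s*}. If moreover |(1/n)⟨X_j, y − Xβ̂⟩| < λ for every j ∉ s* (strict dual feasibility), then β̂ is a minimizer of L_λ over all of ℝ^p. -/
open Matrix

/-- The Lasso objective `L_λ(β) = (1/(2n)) ‖y − Xβ‖₂² + λ ∑_j |β_j|`. -/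
noncomputable def lassoObj {n p : ℕ} (X : Matrix (Fin n) (Fin p) ℝ) (y : Fin n → ℝ)
    (lam : ℝ) (β : Fin p → ℝ) : ℝ :=
  (1 / (2 * (n : ℝ))) * ∑ i, (y i - X.mulVec β i) ^ 2 + lam * ∑ j, |β j|

set_option maxHeartbeats 2000000 in
/-- Primal-dual witness: if `β̂` is supported on `s*`, minimizes the Lasso objective
over the subspace of vectors supported on `s*`, and satisfies strict dual feasibility
`|(1/n)⟨X_j, y − Xβ̂⟩| < λ` for every `j ∉ s*`, then `β̂` minimizes the Lasso
objective over all of `ℝ^p`. -/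
theorem lasso_primal_dual_witness {n p : ℕ} (hn : 0 < n) (hp : 0 < p)
    (X : Matrix (Fin n) (Fin p) ℝ) (y : Fin n → ℝ) (lam : ℝ) (hlam : 0 < lam)
    (s : Finset (Fin p)) (βhat : Fin p → ℝ)
    (hsupp : ∀ j ∉ s, βhat j = 0)
    (hrestmin : ∀ β : Fin p → ℝ, (∀ j ∉ s, β j = 0) →
      lassoObj X y lam βhat ≤ lassoObj X y lam β)
    (hdual : ∀ j ∉ s,
      |(1 / (n : ℝ)) * ∑ i, X i j * (y i - X.mulVec βhat i)| < lam) :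
    ∀ β : Fin p → ℝ, lassoObj X y lam βhat ≤ lassoObj X y lam β := by
  intro β
  have hn' : ((n : ℝ)) ≠ 0 := Nat.cast_ne_zero.mpr hn.ne'
  have hnpos : (0 : ℝ) < n := Nat.cast_pos.mpr hn
  -- residual and correlations
  set r : Fin n → ℝ := fun i => y i - X.mulVec βhat i with hr
  set c : Fin p → ℝ := fun j => ∑ i, X i j * r i with hc
  have mv : ∀ (v : Fin p → ℝ) (i : Fin n), X.mulVec v i = ∑ j, X i j * v j :=
    fun v i => rfl
  have swap : ∀ v : Fin p → ℝ, ∑ i, r i * X.mulVec v i = ∑ j, v j * c j := by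
    intro v
    simp only [mv, hc, Finset.mul_sum]
    rw [Finset.sum_comm]
    refine Finset.sum_congr rfl fun j _ => ?_
    refine Finset.sum_congr rfl fun i _ => ?_
    ring
  -- expansion of the objective around βhat
  have key : ∀ v : Fin p → ℝ,
      lassoObj X y lam (fun j => βhat j + v j)
        = (1 / (2 * (n : ℝ))) * ∑ i, r i ^ 2 - (1 / (n : ℝ)) * ∑ j, v j * c j
          + (1 / (2 * (n : ℝ))) * ∑ i, (X.mulVec v i) ^ 2
          + lam * ∑ j, |βhat j + v j| := by
    intro v
    have h1 : ∀ i, (y i - X.mulVec (fun j => βhat j + v j) i) ^ 2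
        = r i ^ 2 - 2 * (r i * X.mulVec v i) + (X.mulVec v i) ^ 2 := by
      intro i
      have hmv : X.mulVec (fun j => βhat j + v j) i = X.mulVec βhat i + X.mulVec v i := by
        rw [mv, mv, mv, ← Finset.sum_add_distrib]
        exact Finset.sum_congr rfl fun j _ => by ring
      have hri : r i = y i - X.mulVec βhat i := rfl
      rw [hmv]
      rw [show y i - (X.mulVec βhat i + X.mulVec v i) = r i - X.mulVec v i by
        rw [hri]; ring]
      ring
    have h2 : ∑ i, (y i - X.mulVec (fun j => βhat j + v j) i) ^ 2
        = ∑ i, (r i ^ 2 - 2 * (r i * X.mulVec v i) + (X.mulVec v i) ^ 2) :=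
      Finset.sum_congr rfl fun i _ => h1 i
    unfold lassoObj
    rw [h2, Finset.sum_add_distrib, Finset.sum_sub_distrib, ← Finset.mul_sum, swap]
    field_simp
  have Lhat : lassoObj X y lam βhat
      = (1 / (2 * (n : ℝ))) * ∑ i, r i ^ 2 + lam * ∑ j, |βhat j| := rfl
  -- the direction and its restriction to s
  set δ : Fin p → ℝ := fun j => β j - βhat j with hδ
  set δs : Fin p → ℝ := fun j => if j ∈ s then δ j else 0 with hδs
  set Qs : ℝ := ∑ i, (X.mulVec δs i) ^ 2 with hQs
  have hQs0 : (0 : ℝ) ≤ Qs := Finset.sum_nonneg fun i _ => sq_nonneg _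
  set C : ℝ := (1 / (2 * (n : ℝ))) * Qs with hCdef
  have hC0 : (0 : ℝ) ≤ C := by
    apply mul_nonneg _ hQs0
    positivity
  -- scaling of mulVec
  have mvsmul : ∀ (t : ℝ) (w : Fin p → ℝ) (i : Fin n),
      X.mulVec (fun j => t * w j) i = t * X.mulVec w i := by
    intro t w i
    rw [mv, mv, Finset.mul_sum]
    exact Finset.sum_congr rfl fun j _ => by ring
  -- main estimate: for all t ∈ (0,1], L(β̂) ≤ L(β) + t*C
  have main : ∀ t : ℝ, 0 < t → t ≤ 1 →
      lassoObj X y lam βhat ≤ lassoObj X y lam β + t * C := by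
    intro t ht ht1
    -- (A) restricted minimality at βhat + t δs
    have hA : lassoObj X y lam βhat ≤ lassoObj X y lam (fun j => βhat j + t * δs j) := by
      apply hrestmin
      intro j hj
      simp [hδs, hj, hsupp j hj]
    rw [key (fun j => t * δs j)] at hA
    -- rewrite scaled sums in hA
    have e1 : ∑ j, (t * δs j) * c j = t * ∑ j, δs j * c j := by
      rw [Finset.mul_sum]; exact Finset.sum_congr rfl fun j _ => by ring
    have e2 : ∑ i, (X.mulVec (fun j => t * δs j) i) ^ 2 = t ^ 2 * Qs := by
      rw [hQs, Finset.mul_sum]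
      exact Finset.sum_congr rfl fun i _ => by rw [mvsmul]; ring
    rw [e1, e2, Lhat] at hA
    -- sums restricted to s and its complement
    have hT1 : ∑ j, δs j * c j = ∑ j ∈ s, δ j * c j := by
      rw [← Finset.sum_subset (Finset.subset_univ s)]
      · exact Finset.sum_congr rfl fun j hj => by simp [hδs, hj]
      · intro j _ hj
        simp [hδs, hj]
    have hTall : ∑ j, δ j * c j = ∑ j ∈ s, δ j * c j + ∑ j ∈ sᶜ, δ j * c j :=
      (Finset.sum_add_sum_compl s _).symm
    have hSb : ∑ j, |βhat j| = ∑ j ∈ s, |βhat j| := by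
      rw [← Finset.sum_subset (Finset.subset_univ s)]
      intro j _ hj
      simp [hsupp j hj]
    have hBabs : ∑ j, |βhat j + t * δs j| = ∑ j ∈ s, |βhat j + t * δ j| := by
      rw [← Finset.sum_subset (Finset.subset_univ s)]
      · exact Finset.sum_congr rfl fun j hj => by simp [hδs, hj]
      · intro j _ hj
        simp [hδs, hj, hsupp j hj]
    have hAabs : ∑ j, |βhat j + t * δ j|
        = ∑ j ∈ s, |βhat j + t * δ j| + t * ∑ j ∈ sᶜ, |δ j| := by
      rw [← Finset.sum_add_sum_compl s fun j => |βhat j + t * δ j|]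
      congr 1
      rw [Finset.mul_sum]
      refine Finset.sum_congr rfl fun j hj => ?_
      rw [Finset.mem_compl] at hj
      rw [hsupp j hj, zero_add, abs_mul, abs_of_pos ht]
    rw [hT1, hSb, hBabs] at hA
    -- dual feasibility bound off the support
    have hoffsum : (1 / (n : ℝ)) * ∑ j ∈ sᶜ, δ j * c j ≤ lam * ∑ j ∈ sᶜ, |δ j| := by
      rw [Finset.mul_sum, Finset.mul_sum]
      refine Finset.sum_le_sum fun j hj => ?_
      rw [Finset.mem_compl] at hj
      have hcj : |(1 / (n : ℝ)) * c j| < lam := hdual j hj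
      calc (1 / (n : ℝ)) * (δ j * c j) = δ j * ((1 / (n : ℝ)) * c j) := by ring
        _ ≤ |δ j * ((1 / (n : ℝ)) * c j)| := le_abs_self _
        _ = |δ j| * |(1 / (n : ℝ)) * c j| := abs_mul _ _
        _ ≤ |δ j| * lam := mul_le_mul_of_nonneg_left hcj.le (abs_nonneg _)
        _ = lam * |δ j| := mul_comm _ _
    have hofft : t * ((1 / (n : ℝ)) * ∑ j ∈ sᶜ, δ j * c j)
        ≤ t * (lam * ∑ j ∈ sᶜ, |δ j|) := mul_le_mul_of_nonneg_left hoffsum ht.le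
    -- expansion at βhat + t δ
    have hExp : lassoObj X y lam (fun j => βhat j + t * δ j)
        = (1 / (2 * (n : ℝ))) * ∑ i, r i ^ 2
          - (1 / (n : ℝ)) * (t * (∑ j ∈ s, δ j * c j + ∑ j ∈ sᶜ, δ j * c j))
          + (1 / (2 * (n : ℝ))) * (t ^ 2 * ∑ i, (X.mulVec δ i) ^ 2)
          + lam * (∑ j ∈ s, |βhat j + t * δ j| + t * ∑ j ∈ sᶜ, |δ j|) := by
      rw [key (fun j => t * δ j)]
      have e1' : ∑ j, (t * δ j) * c j = t * ∑ j, δ j * c j := by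
        rw [Finset.mul_sum]; exact Finset.sum_congr rfl fun j _ => by ring
      have e2' : ∑ i, (X.mulVec (fun j => t * δ j) i) ^ 2
          = t ^ 2 * ∑ i, (X.mulVec δ i) ^ 2 := by
        rw [Finset.mul_sum]
        exact Finset.sum_congr rfl fun i _ => by rw [mvsmul]; ring
      rw [e1', e2', hTall, hAabs]
    have hQ0 : (0 : ℝ) ≤ (1 / (2 * (n : ℝ))) * (t ^ 2 * ∑ i, (X.mulVec δ i) ^ 2) := by
      have : (0 : ℝ) ≤ ∑ i, (X.mulVec δ i) ^ 2 := Finset.sum_nonneg fun i _ => sq_nonneg _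
      positivity
    -- lower bound: L(β̂ + tδ) ≥ L(β̂) - t²C
    have hLow : lassoObj X y lam βhat
        ≤ lassoObj X y lam (fun j => βhat j + t * δ j) + t ^ 2 * C := by
      rw [hExp, Lhat, hCdef, hSb]
      linarith [hA, hofft, hQ0]
    -- (B) convexity: L(β̂ + tδ) ≤ (1-t) L(β̂) + t L(β)
    have hB : lassoObj X y lam (fun j => βhat j + t * δ j)
        ≤ (1 - t) * lassoObj X y lam βhat + t * lassoObj X y lam β := by
      have hconv : ∀ j, βhat j + t * δ j = (1 - t) * βhat j + t * β j := by
        intro j; simp only [hδ]; ring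
      have hmvconv : ∀ i, X.mulVec (fun j => βhat j + t * δ j) i
          = (1 - t) * X.mulVec βhat i + t * X.mulVec β i := by
        intro i
        rw [mv, mv, mv, Finset.mul_sum, Finset.mul_sum, ← Finset.sum_add_distrib]
        exact Finset.sum_congr rfl fun j _ => by rw [hconv j]; ring
      have hq : ∑ i, (y i - X.mulVec (fun j => βhat j + t * δ j) i) ^ 2
          ≤ (1 - t) * ∑ i, (y i - X.mulVec βhat i) ^ 2
            + t * ∑ i, (y i - X.mulVec β i) ^ 2 := by
        rw [Finset.mul_sum, Finset.mul_sum, ← Finset.sum_add_distrib]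
        refine Finset.sum_le_sum fun i _ => ?_
        rw [hmvconv i]
        have h1t : 0 ≤ 1 - t := by linarith
        nlinarith [sq_nonneg ((y i - X.mulVec βhat i) - (y i - X.mulVec β i)),
          mul_nonneg ht.le h1t]
      have habs : ∑ j, |βhat j + t * δ j|
          ≤ (1 - t) * ∑ j, |βhat j| + t * ∑ j, |β j| := by
        rw [Finset.mul_sum, Finset.mul_sum, ← Finset.sum_add_distrib]
        refine Finset.sum_le_sum fun j _ => ?_
        rw [hconv j]
        calc |(1 - t) * βhat j + t * β j| ≤ |(1 - t) * βhat j| + |t * β j| := abs_add_le _ _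
          _ = (1 - t) * |βhat j| + t * |β j| := by
              rw [abs_mul, abs_mul, abs_of_nonneg (by linarith : (0:ℝ) ≤ 1 - t),
                abs_of_pos ht]
      unfold lassoObj
      have hcoef : (0 : ℝ) ≤ 1 / (2 * (n : ℝ)) := by positivity
      have hq' := mul_le_mul_of_nonneg_left hq hcoef
      have habs' := mul_le_mul_of_nonneg_left habs hlam.le
      linarith [hq', habs']
    -- combine
    have h1 : t * lassoObj X y lam βhat ≤ t * lassoObj X y lam β + t ^ 2 * C := by
      linarith [hB, hLow]
    nlinarith [h1, ht]
  -- conclude by letting t → 0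
  by_contra hcon
  push_neg at hcon
  set ε : ℝ := lassoObj X y lam βhat - lassoObj X y lam β with hε
  have hε0 : 0 < ε := by simp only [hε]; linarith
  have ht0 : 0 < min 1 (ε / (2 * (C + 1))) := by positivity
  have ht1 : min 1 (ε / (2 * (C + 1))) ≤ 1 := min_le_left _ _
  have := main _ ht0 ht1
  have htle : min 1 (ε / (2 * (C + 1))) ≤ ε / (2 * (C + 1)) := min_le_right _ _
  have hCb : min 1 (ε / (2 * (C + 1))) * C ≤ ε / 2 := by
    have h1 : min 1 (ε / (2 * (C + 1))) * C ≤ (ε / (2 * (C + 1))) * C :=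
      mul_le_mul_of_nonneg_right htle hC0
    have h2 : (ε / (2 * (C + 1))) * C ≤ ε / 2 := by
      rw [div_mul_eq_mul_div, div_le_div_iff₀ (by positivity) (by norm_num)]
      nlinarith
    linarith
  simp only [hε] at hCb
  linarith
end

section
/- Let X ∈ ℝ^{n×k}, ε ∈ ℝ^n, β* ∈ ℝ^k, y = Xβ* + ε, and λ > 0. Suppose the minimum eigenvalue of (1/n)XᵀX is at least c_min > 0, and β̂ minimizes L_λ(β) = (1/(2n))‖y − Xβ‖₂² + λ∑_{j=1}^k |β_j| over ℝ^k. Then ‖β̂ − β*‖_∞ ≤ λ√k/c_min + ‖((1/n)XᵀX)⁻¹ (1/n)Xᵀε‖_∞, where ‖v‖_∞ = max_j |v_j|. -/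
/-!
With `A = (1/n)XᵀX`, `b = (1/n)Xᵀε` and `z = (1/n)Xᵀ(y − Xβ̂)`, the model `y = Xβ* + ε` gives
`z = A(β* − β̂) + b`, hence `β̂ − β* = A⁻¹b − A⁻¹z`. Perturbing the minimizer `β̂` along a
coordinate shows `‖z‖_∞ ≤ λ` (the Lasso optimality condition). For `w = A⁻¹z` the eigenvalue
bound then gives `c‖w‖₂² ≤ ⟪w, Aw⟫ = ⟪w, z⟫ ≤ λ‖w‖₁ ≤ λ√k‖w‖₂`, so `‖w‖_∞ ≤ ‖w‖₂ ≤ λ√k/c`.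
-/

open Matrix

/-- The `ℓ∞` norm `‖v‖_∞ = max_j |v_j|` of a vector on a nonempty `Fin k`. -/
noncomputable def linf {k : ℕ} (hk : 0 < k) (v : Fin k → ℝ) : ℝ :=
  Finset.univ.sup' ⟨⟨0, hk⟩, Finset.mem_univ _⟩ fun j => |v j|

theorem abs_le_of_forall_mul_le_sq_add {a b c : ℝ} (h : ∀ t, t * c ≤ t ^ 2 * a + |t| * b) :
    |c| ≤ b := by
  have key : ∀ s : ℝ, (∀ t > 0, t * s ≤ t ^ 2 * a + t * b) → s ≤ b := fun s hs =>
    le_of_forall_pos_le_add fun δ hδ => by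
      set t := δ / (|a| + 1)
      have ht : 0 < t := by positivity
      have hs_le : s ≤ t * a + b := le_of_mul_le_mul_left (by nlinarith [hs t ht]) ht
      have hta : t * a ≤ δ :=
        calc t * a ≤ t * (|a| + 1) := by gcongr; linarith [le_abs_self a]
          _ = δ := div_mul_cancel₀ δ (by positivity)
      linarith
  refine abs_le.2 ⟨?_, key c fun t ht => by simpa [abs_of_pos ht] using h t⟩
  have := key (-c) fun t ht => by simpa [abs_of_pos ht] using h (-t)
  linarith

theorem sum_sq_sub_mul {ι : Type*} [Fintype ι] (r u : ι → ℝ) (t : ℝ) :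
    ∑ i, (r i - t * u i) ^ 2 = ∑ i, r i ^ 2 - 2 * t * (u ⬝ᵥ r) + t ^ 2 * (u ⬝ᵥ u) := by
  simp only [dotProduct, Finset.mul_sum, ← Finset.sum_sub_distrib, ← Finset.sum_add_distrib]
  exact Finset.sum_congr rfl fun i _ => by ring

theorem sum_abs_add_smul_le {ι : Type*} [Fintype ι] (β v : ι → ℝ) (t : ℝ) :
    ∑ j, |(β + t • v) j| ≤ ∑ j, |β j| + |t| * ∑ j, |v j| := by
  rw [Finset.mul_sum, ← Finset.sum_add_distrib]
  refine Finset.sum_le_sum fun j _ => ?_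
  simpa only [Pi.add_apply, Pi.smul_apply, smul_eq_mul, abs_mul] using abs_add_le (β j) (t * v j)

section Lasso

variable {n p : ℕ} (X : Matrix (Fin n) (Fin p) ℝ) (y : Fin n → ℝ) {lam : ℝ}

theorem lassoObj_add_smul_le (hlam : 0 ≤ lam) (β v : Fin p → ℝ) (t : ℝ) :
    lassoObj X y lam (β + t • v) ≤
      lassoObj X y lam β - t * ((1 / n) * (v ⬝ᵥ Xᵀ *ᵥ (y - X *ᵥ β))) +
        t ^ 2 * ((X *ᵥ v) ⬝ᵥ (X *ᵥ v) / (2 * n)) + |t| * (lam * ∑ j, |v j|) := by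
  have hres : ∀ i, y i - (X *ᵥ (β + t • v)) i = (y - X *ᵥ β) i - t * (X *ᵥ v) i := fun i => by
    simp only [mulVec_add, mulVec_smul, Pi.add_apply, Pi.sub_apply, Pi.smul_apply, smul_eq_mul]
    ring
  have hl1 := mul_le_mul_of_nonneg_left (sum_abs_add_smul_le β v t) hlam
  unfold lassoObj
  simp only [hres, sum_sq_sub_mul, dotProduct_mulVec, vecMul_transpose, Pi.sub_apply]
  linear_combination hl1

theorem abs_dotProduct_residual_le_of_forall_lassoObj_le {βhat : Fin p → ℝ} (hlam : 0 ≤ lam)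
    (hmin : ∀ β, lassoObj X y lam βhat ≤ lassoObj X y lam β) (v : Fin p → ℝ) :
    |(1 / n) * (v ⬝ᵥ Xᵀ *ᵥ (y - X *ᵥ βhat))| ≤ lam * ∑ j, |v j| :=
  abs_le_of_forall_mul_le_sq_add (a := (X *ᵥ v) ⬝ᵥ (X *ᵥ v) / (2 * n)) fun t => by
    linarith [hmin (βhat + t • v), lassoObj_add_smul_le X y hlam βhat v t]

theorem abs_residual_correlation_le_of_forall_lassoObj_le {βhat : Fin p → ℝ} (hlam : 0 ≤ lam)
    (hmin : ∀ β, lassoObj X y lam βhat ≤ lassoObj X y lam β) (j : Fin p) :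
    |((1 / (n : ℝ)) • Xᵀ *ᵥ (y - X *ᵥ βhat)) j| ≤ lam := by
  simpa [single_dotProduct, Pi.single_apply, apply_ite] using
    abs_dotProduct_residual_le_of_forall_lassoObj_le X y hlam hmin (Pi.single j 1)

end Lasso

section Coercive

variable {ι : Type*} [Fintype ι] {A : Matrix ι ι ℝ} {c : ℝ}

theorem dotProduct_self_nonneg (w : ι → ℝ) : 0 ≤ w ⬝ᵥ w :=
  Finset.sum_nonneg fun i _ => mul_self_nonneg (w i)

theorem isUnit_det_of_coercive [DecidableEq ι] (hc : 0 < c)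
    (hA : ∀ v, c * (v ⬝ᵥ v) ≤ v ⬝ᵥ A *ᵥ v) : IsUnit A.det := by
  refine isUnit_iff_ne_zero.2 fun hdet => ?_
  obtain ⟨v, hv, hAv⟩ := exists_mulVec_eq_zero_iff.2 hdet
  have hvv : v ⬝ᵥ v ≤ 0 := by
    have := hA v
    rw [hAv, dotProduct_zero] at this
    exact nonpos_of_mul_nonpos_right this hc
  exact hv (dotProduct_self_eq_zero.1 (le_antisymm hvv (dotProduct_self_nonneg v)))

theorem abs_le_sqrt_dotProduct_self (w : ι → ℝ) (j : ι) : |w j| ≤ √(w ⬝ᵥ w) :=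
  Real.abs_le_sqrt <| by
    simpa [dotProduct, sq] using
      Finset.single_le_sum (fun i _ => mul_self_nonneg (w i)) (Finset.mem_univ j)

theorem sum_abs_le_sqrt_card_mul_sqrt (w : ι → ℝ) :
    ∑ j, |w j| ≤ √(Fintype.card ι) * √(w ⬝ᵥ w) := by
  rw [← Real.sqrt_mul (by positivity), Real.le_sqrt (by positivity)
    (mul_nonneg (by positivity) (dotProduct_self_nonneg w))]
  simpa [dotProduct, sq] using
    sq_sum_le_card_mul_sum_sq (s := Finset.univ) (f := fun j => |w j|)

theorem abs_le_of_coercive_of_mulVec_eq (hc : 0 < c) (hA : ∀ v, c * (v ⬝ᵥ v) ≤ v ⬝ᵥ A *ᵥ v)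
    {w z : ι → ℝ} {lam : ℝ} (hAw : A *ᵥ w = z) (hz : ∀ j, |z j| ≤ lam) (j : ι) :
    |w j| ≤ lam * √(Fintype.card ι) / c := by
  set N := √(w ⬝ᵥ w)
  have hlam : 0 ≤ lam := (abs_nonneg _).trans (hz j)
  have hN : c * N ^ 2 ≤ lam * √(Fintype.card ι) * N :=
    calc c * N ^ 2 = c * (w ⬝ᵥ w) := by rw [Real.sq_sqrt (dotProduct_self_nonneg w)]
      _ ≤ w ⬝ᵥ z := hAw ▸ hA w
      _ ≤ ∑ j, |w j| * lam := Finset.sum_le_sum fun i _ =>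
        (le_abs_self _).trans ((abs_mul _ _).trans_le
          (mul_le_mul_of_nonneg_left (hz i) (abs_nonneg _)))
      _ = lam * ∑ j, |w j| := by rw [← Finset.sum_mul, mul_comm]
      _ ≤ lam * √(Fintype.card ι) * N := by
        rw [mul_assoc]; exact mul_le_mul_of_nonneg_left (sum_abs_le_sqrt_card_mul_sqrt w) hlam
  have hcN : c * N ≤ lam * √(Fintype.card ι) := by
    nlinarith [Real.sqrt_nonneg (w ⬝ᵥ w), mul_nonneg hlam (Real.sqrt_nonneg (Fintype.card ι))]
  rw [le_div_iff₀ hc]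
  nlinarith [abs_le_sqrt_dotProduct_self w j]

end Coercive

theorem linf_le {k : ℕ} (hk : 0 < k) {v : Fin k → ℝ} {M : ℝ} (h : ∀ j, |v j| ≤ M) :
    linf hk v ≤ M :=
  Finset.sup'_le _ _ fun j _ => h j

theorem abs_le_linf {k : ℕ} (hk : 0 < k) (v : Fin k → ℝ) (j : Fin k) : |v j| ≤ linf hk v :=
  Finset.le_sup' (fun j => |v j|) (Finset.mem_univ j)

theorem lasso_linf_error_bound_general {n k : ℕ} (hk : 0 < k)
    (X : Matrix (Fin n) (Fin k) ℝ) (ε : Fin n → ℝ) (βstar : Fin k → ℝ)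
    (y : Fin n → ℝ) (hy : y = X.mulVec βstar + ε)
    (lam : ℝ) (hlam : 0 < lam)
    (cmin : ℝ) (hc : 0 < cmin)
    (heig : ∀ v : Fin k → ℝ,
      cmin * ∑ j, (v j) ^ 2 ≤ ∑ j, v j * ((1 / (n : ℝ)) • (Xᵀ * X)).mulVec v j)
    (βhat : Fin k → ℝ)
    (hmin : ∀ β : Fin k → ℝ, lassoObj X y lam βhat ≤ lassoObj X y lam β) :
    linf hk (βhat - βstar) ≤
      lam * Real.sqrt k / cmin +
        linf hk (((1 / (n : ℝ)) • (Xᵀ * X))⁻¹.mulVec ((1 / (n : ℝ)) • Xᵀ.mulVec ε)) := by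
  set A := (1 / (n : ℝ)) • (Xᵀ * X)
  set b := (1 / (n : ℝ)) • Xᵀ *ᵥ ε
  set z := (1 / (n : ℝ)) • Xᵀ *ᵥ (y - X *ᵥ βhat)
  have hcoer : ∀ v, cmin * (v ⬝ᵥ v) ≤ v ⬝ᵥ A *ᵥ v := fun v => by
    simpa [dotProduct, sq] using heig v
  have hdet := isUnit_det_of_coercive hc hcoer
  have hz : z = A *ᵥ (βstar - βhat) + b := by
    simp only [z, A, b, hy, smul_mulVec, ← mulVec_mulVec, mulVec_sub, mulVec_add]
    module
  have hsplit : βhat - βstar = A⁻¹ *ᵥ b - A⁻¹ *ᵥ z := by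
    rw [hz, mulVec_add, mulVec_mulVec, nonsing_inv_mul _ hdet, one_mulVec]
    abel
  have hw : ∀ j, |(A⁻¹ *ᵥ z) j| ≤ lam * √k / cmin := by
    simpa using abs_le_of_coercive_of_mulVec_eq hc hcoer
      (by rw [mulVec_mulVec, mul_nonsing_inv _ hdet, one_mulVec])
      (abs_residual_correlation_le_of_forall_lassoObj_le X y hlam.le hmin)
  refine linf_le hk fun j => ?_
  calc |(βhat - βstar) j| = |(A⁻¹ *ᵥ b) j - (A⁻¹ *ᵥ z) j| := by rw [hsplit, Pi.sub_apply]
    _ ≤ |(A⁻¹ *ᵥ z) j| + |(A⁻¹ *ᵥ b) j| := (abs_sub _ _).trans_eq (add_comm _ _)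
    _ ≤ _ := add_le_add (hw j) (abs_le_linf hk _ j)

/-- Deterministic `ℓ∞` estimation error bound: if the minimum eigenvalue of
`(1/n)XᵀX` is at least `c_min > 0` (stated via the quadratic form) and `β̂` is a
Lasso minimizer for `y = Xβ* + ε`, then
`‖β̂ − β*‖_∞ ≤ λ√k/c_min + ‖((1/n)XᵀX)⁻¹ (1/n)Xᵀε‖_∞`. -/
theorem lasso_linf_error_bound {n k : ℕ} (hn : 0 < n) (hk : 0 < k)
    (X : Matrix (Fin n) (Fin k) ℝ) (ε : Fin n → ℝ) (βstar : Fin k → ℝ)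
    (y : Fin n → ℝ) (hy : y = X.mulVec βstar + ε)
    (lam : ℝ) (hlam : 0 < lam)
    (cmin : ℝ) (hc : 0 < cmin)
    (heig : ∀ v : Fin k → ℝ,
      cmin * ∑ j, (v j) ^ 2 ≤ ∑ j, v j * ((1 / (n : ℝ)) • (Xᵀ * X)).mulVec v j)
    (βhat : Fin k → ℝ)
    (hmin : ∀ β : Fin k → ℝ, lassoObj X y lam βhat ≤ lassoObj X y lam β) :
    linf hk (βhat - βstar) ≤
      lam * Real.sqrt k / cmin +
        linf hk (((1 / (n : ℝ)) • (Xᵀ * X))⁻¹.mulVec ((1 / (n : ℝ)) • Xᵀ.mulVec ε)) :=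
  lasso_linf_error_bound_general hk X ε βstar y hy lam hlam cmin hc heig βhat hmin
end
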